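/- Set ε = 1/8 and x0 = 1/8, and for each d ≥ 3 let σ = σ_d be the unique positive solution of x0²/(2σ²) = log( dσ/(√(2π) ε x0) ). Then there exists a three-layer ReLU network f_W with path-norm with bias PN_b(W) ≤ 1 such that | ∫_{ℝ^d} f_W(x) ρ_d(x) dx | ≥ 1/(513 d² + 512 d + 1), i.e. the three-layer IPM satisfies d_{F_{3L}}(μ_d,ν_d) ≥ 1/(513 d² + 512 d + 1). -/

import Mathlib

open MeasureTheory

noncomputable section

/-- The set `B = {-3/2, -1/2, 1/2, 3/2}` as a finset of reals. -/
def Bset : Finset ℝ := {-3/2, -1/2, 1/2, 3/2}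

/-- The signed Gaussian-mixture density `ρ_d`. -/
def rhoMix (d : ℕ) (σ : ℝ) (x : EuclideanSpace ℝ (Fin d)) : ℝ :=
  (2 / (4 * Real.sqrt (2 * Real.pi * σ ^ 2)) ^ d) *
    ∑ β ∈ Fintype.piFinset (fun _ : Fin d => Bset),
      (∏ i, Real.sign (β i)) * Real.exp (-(∑ i, (x i - β i) ^ 2) / (2 * σ ^ 2))

/-- `ReLU(t) = max(t, 0)`. -/
def relu (t : ℝ) : ℝ := max t 0

/-- A three-layer ReLU neural network with weights
`W = ((θ_j, b_j)_j, (W_{i,j})_{i=1..m2, j=0..m1}, (w_i)_{i=0..m2})`. -/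
structure ThreeLayerNet (d : ℕ) where
  m1 : ℕ
  m2 : ℕ
  θ : Fin m1 → EuclideanSpace ℝ (Fin d)
  b : Fin m1 → ℝ
  W : Fin m2 → Fin m1 → ℝ
  W0 : Fin m2 → ℝ
  w : Fin m2 → ℝ
  w0 : ℝ

/-- The function computed by a three-layer ReLU network. -/
def ThreeLayerNet.eval {d : ℕ} (N : ThreeLayerNet d) (x : EuclideanSpace ℝ (Fin d)) : ℝ :=
  ∑ i, N.w i * relu (∑ j, N.W i j * relu ((inner ℝ (N.θ j) x : ℝ) - N.b j) + N.W0 i) + N.w0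

/-- The path-norm with bias of a three-layer ReLU network. -/
def ThreeLayerNet.pnB {d : ℕ} (N : ThreeLayerNet d) : ℝ :=
  ∑ i, |N.w i| *
    (∑ j, |N.W i j| * Real.sqrt (‖N.θ j‖ ^ 2 + (N.b j) ^ 2) + |N.W0 i|) + |N.w0|

/-! The witness network computes `zigzag a d (∑ i, ramp (x i))`: `ramp` is a clipped linear map,
`1` right of `3/8` and `0` left of `-3/8`, and `zigzag` interpolates `a * (-1) ^ n` at the
integers `n ∈ [0, d]`. Its path norm is at most `16 a d² + a`, which is at most `1` for
`a = 1 / (513 d² + 512 d + 1)`.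

For a centre `β ∈ B^d`, the Gaussian `∏ i, gaussBump σ (β i)` puts all but a fraction `1/8` of
its mass (Mills' ratio in each coordinate, with the choice of `σ`, and Bernoulli's inequality) on
the box where `∑ i, ramp (x i)` counts the positive `β i`. There the network equals
`a * (-1) ^ #{i | 0 < β i}`, which cancels the sign `χ_β` up to `(-1) ^ d`. So the `4 ^ d` terms
of `∫ f ρ_d` all have the same sign and add up to `2 a (-1) ^ d` up to an error `a / 2`. -/

open Real Filter Set Topology
open scoped Finset

def gaussBump (σ b t : ℝ) : ℝ := exp (-(t - b) ^ 2 / (2 * σ ^ 2))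

section Gaussian

variable {σ : ℝ}

lemma gaussBump_nonneg (σ b t : ℝ) : 0 ≤ gaussBump σ b t := (exp_pos _).le

lemma gaussBump_neg (σ b t : ℝ) : gaussBump σ b (-t) = gaussBump σ (-b) t := by
  simp only [gaussBump]
  ring_nf

lemma gaussBump_eq_exp_neg_mul_sq (σ b : ℝ) :
    gaussBump σ b = fun t => exp (-(2 * σ ^ 2)⁻¹ * (t - b) ^ 2) := by
  ext t
  simp only [gaussBump]
  ring_nf

lemma integrable_gaussBump (hσ : 0 < σ) (b : ℝ) : Integrable (gaussBump σ b) := by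
  rw [gaussBump_eq_exp_neg_mul_sq]
  exact (integrable_exp_neg_mul_sq (by positivity)).comp_sub_right b

lemma integral_gaussBump (hσ : 0 < σ) (b : ℝ) : ∫ t, gaussBump σ b t = √(2 * π * σ ^ 2) := by
  rw [gaussBump_eq_exp_neg_mul_sq,
    integral_sub_right_eq_self (fun t => exp (-(2 * σ ^ 2)⁻¹ * t ^ 2)) b, integral_gaussian]
  congr 1
  field_simp

lemma hasDerivAt_gaussBump (σ b t : ℝ) :
    HasDerivAt (gaussBump σ b) (-(t - b) / σ ^ 2 * gaussBump σ b t) t := by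
  convert ((((hasDerivAt_id' t).sub_const b).fun_pow 2).fun_neg.div_const (2 * σ ^ 2)).exp
    using 1
  · rfl
  · rw [gaussBump]
    push_cast
    ring

lemma setIntegral_Ioi_gaussBump_le (hσ : 0 < σ) (b : ℝ) {c : ℝ} (hc : 0 < c) :
    ∫ t in Ioi (b + c), gaussBump σ b t ≤ σ ^ 2 / c * exp (-c ^ 2 / (2 * σ ^ 2)) := by
  set f' : ℝ → ℝ := fun t => (t - b) / σ ^ 2 * gaussBump σ b t
  have hderiv : ∀ t, HasDerivAt (fun t => -gaussBump σ b t) (f' t) t := fun t =>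
    (hasDerivAt_gaussBump σ b t).fun_neg.congr_deriv (by simp only [f']; ring)
  have hf' : Integrable f' := by
    have := ((integrable_mul_exp_neg_mul_sq (b := (2 * σ ^ 2)⁻¹) (by positivity)).comp_sub_right
      b).div_const (σ ^ 2)
    convert this using 2 with t
    simp only [f', gaussBump_eq_exp_neg_mul_sq]
    ring
  have hlim : Tendsto (fun t => -gaussBump σ b t) atTop (𝓝 0) :=
    tendsto_zero_of_hasDerivAt_of_integrableOn_Ioi (a := 0) (fun t _ => hderiv t)
      hf'.integrableOn (integrable_gaussBump hσ b).neg.integrableOn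
  have hFTC : ∫ t in Ioi (b + c), f' t = gaussBump σ b (b + c) := by
    rw [integral_Ioi_of_hasDerivAt_of_tendsto' (fun t _ => hderiv t) hf'.integrableOn hlim]
    ring
  calc ∫ t in Ioi (b + c), gaussBump σ b t
      ≤ ∫ t in Ioi (b + c), σ ^ 2 / c * f' t := by
        refine setIntegral_mono_on (integrable_gaussBump hσ b).integrableOn
          (hf'.const_mul _).integrableOn measurableSet_Ioi fun t ht => ?_
        have : 1 ≤ (t - b) / c := by rw [le_div_iff₀ hc]; linarith [mem_Ioi.1 ht]
        calc gaussBump σ b t ≤ (t - b) / c * gaussBump σ b t :=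
              le_mul_of_one_le_left (gaussBump_nonneg σ b t) this
          _ = σ ^ 2 / c * f' t := by simp only [f']; field_simp
    _ = σ ^ 2 / c * exp (-c ^ 2 / (2 * σ ^ 2)) := by
        rw [integral_const_mul, hFTC, gaussBump, add_sub_cancel_left]

lemma setIntegral_Ioi_gaussBump_le_of_le (hσ : 0 < σ) {b c r : ℝ} (hc : 0 < c)
    (hr : b + c ≤ r) :
    ∫ t in Ioi r, gaussBump σ b t ≤ σ ^ 2 / c * exp (-c ^ 2 / (2 * σ ^ 2)) :=
  (setIntegral_mono_set (integrable_gaussBump hσ b).integrableOn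
    (Eventually.of_forall (gaussBump_nonneg σ b)) (Ioi_subset_Ioi hr).eventuallyLE).trans
    (setIntegral_Ioi_gaussBump_le hσ b hc)

lemma setIntegral_Iio_gaussBump_le_of_le (hσ : 0 < σ) {b c r : ℝ} (hc : 0 < c)
    (hr : r + c ≤ b) :
    ∫ t in Iio r, gaussBump σ b t ≤ σ ^ 2 / c * exp (-c ^ 2 / (2 * σ ^ 2)) := by
  rw [setIntegral_congr_set Iio_ae_eq_Iic, ← neg_neg r, ← integral_comp_neg_Ioi]
  simp_rw [gaussBump_neg]
  exact setIntegral_Ioi_gaussBump_le_of_le hσ hc (by linarith)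

end Gaussian

section ProductConcentration

variable {ι : Type*} [Fintype ι]

lemma abs_integral_mul_prod_sub_le {g : ι → ℝ → ℝ} {S : ι → Set ℝ} {F : (ι → ℝ) → ℝ}
    {a v : ℝ} (hg : ∀ i, Integrable (g i)) (hg₀ : ∀ i t, 0 ≤ g i t)
    (hS : ∀ i, MeasurableSet (S i)) (hFm : AEStronglyMeasurable F) (hF : ∀ y, |F y| ≤ a)
    (hv : |v| ≤ a) (hFS : ∀ y, (∀ i, y i ∈ S i) → F y = v) :
    |(∫ y, F y * ∏ i, g i (y i)) - v * ∏ i, ∫ t, g i t|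
      ≤ 2 * a * ((∏ i, ∫ t, g i t) - ∏ i, ∫ t in S i, g i t) := by
  set G : (ι → ℝ) → ℝ := fun y => ∏ i, g i (y i)
  set H : (ι → ℝ) → ℝ := fun y => ∏ i, (S i).indicator (g i) (y i)
  have hG : Integrable G := Integrable.fintype_prod hg
  have hH : Integrable H := Integrable.fintype_prod fun i => (hg i).indicator (hS i)
  have hFG : Integrable fun y => F y * G y :=
    hG.bdd_mul hFm (Eventually.of_forall fun y => (Real.norm_eq_abs _).trans_le (hF y))
  have hG_int : ∫ y, G y = ∏ i, ∫ t, g i t := integral_fintype_prod_volume_eq_prod g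
  have hH_int : ∫ y, H y = ∏ i, ∫ t in S i, g i t := by
    simp only [H, integral_fintype_prod_volume_eq_prod, integral_indicator (hS _)]
  have hpoint : ∀ y, |F y - v| * G y ≤ 2 * a * (G y - H y) := by
    intro y
    by_cases hy : ∀ i, y i ∈ S i
    · have hHG : H y = G y := Finset.prod_congr rfl fun i _ => indicator_of_mem (hy i) _
      simp [hFS y hy, hHG]
    · obtain ⟨i, hi⟩ := not_forall.1 hy
      have hH0 : H y = 0 := Finset.prod_eq_zero (Finset.mem_univ i) (indicator_of_notMem hi _)
      rw [hH0, sub_zero]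
      refine mul_le_mul_of_nonneg_right ?_ (Finset.prod_nonneg fun i _ => hg₀ i (y i))
      linarith [abs_sub (F y) v, hF y]
  calc |(∫ y, F y * G y) - v * ∏ i, ∫ t, g i t|
      = |∫ y, (F y - v) * G y| := by
        have hsplit : ∫ y, (F y - v) * G y = (∫ y, F y * G y) - v * ∫ y, G y := by
          simp_rw [sub_mul]
          rw [integral_sub hFG (hG.const_mul v), integral_const_mul]
        rw [hsplit, hG_int]
    _ ≤ ∫ y, |F y - v| * G y := by
        refine (abs_integral_le_integral_abs).trans_eq (integral_congr_ae ?_)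
        filter_upwards with y
        rw [abs_mul, abs_of_nonneg (Finset.prod_nonneg fun i _ => hg₀ i (y i))]
    _ ≤ ∫ y, 2 * a * (G y - H y) :=
        integral_mono ((hFG.sub (hG.const_mul v)).abs.congr (Eventually.of_forall fun y => by
          simp only [Pi.sub_apply, ← sub_mul, abs_mul,
            abs_of_nonneg (Finset.prod_nonneg fun i _ => hg₀ i (y i)), G]))
          ((hG.sub hH).const_mul _) hpoint
    _ = 2 * a * ((∏ i, ∫ t, g i t) - ∏ i, ∫ t in S i, g i t) := by
        rw [integral_const_mul, integral_sub hG hH, hG_int, hH_int]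

lemma pow_card_sub_prod_le {x : ι → ℝ} {Z δ : ℝ} (hZ : 0 ≤ Z) (hδ : δ ≤ 1)
    (hx : ∀ i, (1 - δ) * Z ≤ x i) :
    Z ^ Fintype.card ι - ∏ i, x i ≤ Fintype.card ι * δ * Z ^ Fintype.card ι := by
  have hprod : ((1 - δ) * Z) ^ Fintype.card ι ≤ ∏ i, x i := by
    have := Finset.prod_le_prod (s := Finset.univ) (f := fun _ => (1 - δ) * Z)
      (fun i _ => mul_nonneg (by linarith) hZ) fun i _ => hx i
    rwa [Finset.prod_const, Finset.card_univ] at this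
  have hbernoulli : 1 + Fintype.card ι * (-δ) ≤ (1 + -δ) ^ Fintype.card ι :=
    one_add_mul_le_pow (by linarith) _
  rw [← sub_eq_add_neg] at hbernoulli
  rw [mul_pow] at hprod
  linarith [mul_le_mul_of_nonneg_right hbernoulli (pow_nonneg hZ (Fintype.card ι))]

end ProductConcentration

lemma card_mul_sub_le_abs_sum {α : Type*} {s : Finset α} {f : α → ℝ} {m ε : ℝ}
    (h : ∀ x ∈ s, |f x - m| ≤ ε) : #s * (|m| - ε) ≤ |∑ x ∈ s, f x| := by
  have hsum : |∑ x ∈ s, f x - #s * m| ≤ #s * ε := by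
    rw [← nsmul_eq_mul, ← Finset.sum_const, ← Finset.sum_sub_distrib, ← nsmul_eq_mul,
      ← Finset.sum_const]
    exact (Finset.abs_sum_le_sum_abs _ _).trans (Finset.sum_le_sum h)
  have hm : |(#s : ℝ) * m| = #s * |m| := by rw [abs_mul, Nat.abs_cast]
  linarith [abs_sub_abs_le_abs_sub ((#s : ℝ) * m) (∑ x ∈ s, f x), abs_sub_comm
    ((#s : ℝ) * m) (∑ x ∈ s, f x)]

section Zigzag

@[fun_prop]
lemma continuous_relu : Continuous relu := continuous_id.max continuous_const

lemma relu_of_nonneg {t : ℝ} (h : 0 ≤ t) : relu t = t := max_eq_left h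

lemma relu_of_nonpos {t : ℝ} (h : t ≤ 0) : relu t = 0 := max_eq_right h

def ramp (t : ℝ) : ℝ := 4 / 3 * (relu (t + 3 / 8) - relu (t - 3 / 8))

lemma ramp_mem_Icc (t : ℝ) : ramp t ∈ Icc 0 1 := by
  unfold ramp relu
  constructor <;> grind

lemma ramp_of_le {t : ℝ} (ht : t ≤ -(3 / 8)) : ramp t = 0 := by
  rw [ramp, relu_of_nonpos (by linarith), relu_of_nonpos (by linarith)]
  ring

lemma ramp_of_ge {t : ℝ} (ht : 3 / 8 ≤ t) : ramp t = 1 := by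
  rw [ramp, relu_of_nonneg (by linarith), relu_of_nonneg (by linarith)]
  ring

@[fun_prop]
lemma continuous_ramp : Continuous ramp := by
  unfold ramp
  fun_prop

def zigzagCoeff (a : ℝ) (k : ℕ) : ℝ := if k = 0 then -(2 * a) else (-1) ^ (k + 1) * (4 * a)

/-- The piecewise linear function on `[0, d]` interpolating `a * (-1) ^ n` at the integers. -/
def zigzag (a : ℝ) (d : ℕ) (s : ℝ) : ℝ := a + ∑ k ∈ Finset.range d, zigzagCoeff a k * relu (s - k)

variable {a : ℝ} {d : ℕ}

@[fun_prop]
lemma continuous_zigzag : Continuous (zigzag a d) := by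
  unfold zigzag
  fun_prop

lemma continuous_zigzag_sum_ramp :
    Continuous fun y : Fin d → ℝ => zigzag a d (∑ i, ramp (y i)) := by
  fun_prop

lemma add_sum_zigzagCoeff_mul (a s : ℝ) (k : ℕ) :
    a + ∑ j ∈ Finset.range (k + 1), zigzagCoeff a j * (s - j)
      = a * (-1) ^ k * (1 - 2 * (s - k)) := by
  induction k with
  | zero => simp [zigzagCoeff]; ring
  | succ n ih =>
    rw [Finset.sum_range_succ, ← add_assoc, ih, zigzagCoeff, if_neg n.succ_ne_zero]
    push_cast
    ring

lemma zigzag_eq_of_mem_Icc {k : ℕ} (hk : k < d) {s : ℝ} (hs : s ∈ Icc (k : ℝ) (k + 1)) :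
    zigzag a d s = a * (-1) ^ k * (1 - 2 * (s - k)) := by
  rw [zigzag, ← Finset.sum_range_add_sum_Ico _ hk, Finset.sum_eq_zero (s := Finset.Ico _ _),
    add_zero, ← add_sum_zigzagCoeff_mul]
  · congr 1
    refine Finset.sum_congr rfl fun j hj => ?_
    have : (j : ℝ) ≤ k := by exact_mod_cast Nat.lt_succ_iff.1 (Finset.mem_range.1 hj)
    rw [relu_of_nonneg (by linarith [hs.1])]
  · intro j hj
    have : (k : ℝ) + 1 ≤ j := by exact_mod_cast (Finset.mem_Ico.1 hj).1
    rw [relu_of_nonpos (by linarith [hs.2]), mul_zero]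

lemma zigzag_zero : zigzag a d 0 = a := by
  rw [zigzag, Finset.sum_eq_zero fun k _ => ?_, add_zero]
  rw [relu_of_nonpos (by simp), mul_zero]

lemma zigzag_natCast {n : ℕ} (hn : n ≤ d) : zigzag a d n = a * (-1) ^ n := by
  cases n with
  | zero => simpa using zigzag_zero
  | succ m =>
    rw [zigzag_eq_of_mem_Icc (k := m) hn ⟨by simp, by simp⟩]
    push_cast
    ring

lemma abs_zigzag_le (ha : 0 ≤ a) {s : ℝ} (hs : s ∈ Icc 0 (d : ℝ)) : |zigzag a d s| ≤ a := by
  rcases hs.1.eq_or_lt with rfl | hs0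
  · rw [zigzag_zero, abs_of_nonneg ha]
  obtain ⟨k, hk⟩ := Nat.exists_eq_add_of_lt (Nat.ceil_pos.2 hs0)
  have hceil : (⌈s⌉₊ : ℝ) = k + 1 := by rw [hk]; push_cast; ring
  have hkd : k < d := by have := Nat.ceil_le.2 hs.2; omega
  have hks : s ∈ Icc (k : ℝ) (k + 1) :=
    ⟨by linarith [Nat.ceil_lt_add_one hs.1], hceil ▸ Nat.le_ceil s⟩
  rw [zigzag_eq_of_mem_Icc hkd hks, abs_mul, abs_mul, abs_pow, abs_neg, abs_one, one_pow,
    mul_one, abs_of_nonneg ha]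
  exact mul_le_of_le_one_right ha (abs_le.2 ⟨by linarith [hks.2], by linarith [hks.1]⟩)

lemma abs_zigzag_sum_ramp_le (ha : 0 ≤ a) (y : Fin d → ℝ) :
    |zigzag a d (∑ i, ramp (y i))| ≤ a := by
  refine abs_zigzag_le ha ⟨Finset.sum_nonneg fun i _ => (ramp_mem_Icc _).1, ?_⟩
  simpa using Finset.sum_le_sum fun i (_ : i ∈ Finset.univ) => (ramp_mem_Icc (y i)).2

end Zigzag

lemma ThreeLayerNet.pnB_le {d : ℕ} (N : ThreeLayerNet d) {A B C D : ℝ}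
    (hw : ∀ i, |N.w i| ≤ A) (hW : ∀ i j, |N.W i j| * √(‖N.θ j‖ ^ 2 + N.b j ^ 2) ≤ B)
    (hW0 : ∀ i, |N.W0 i| ≤ C) (hw0 : |N.w0| ≤ D) :
    N.pnB ≤ N.m2 * (A * (N.m1 * B + C)) + D := by
  refine add_le_add ?_ hw0
  calc _ ≤ ∑ _i : Fin N.m2, A * (N.m1 * B + C) := Finset.sum_le_sum fun i _ => ?_
    _ = _ := by simp
  have hinner : ∑ j, |N.W i j| * √(‖N.θ j‖ ^ 2 + N.b j ^ 2) ≤ N.m1 * B := by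
    simpa using Finset.sum_le_sum fun j (_ : j ∈ Finset.univ) => hW i j
  exact mul_le_mul (hw i) (by linarith [hW0 i])
    (add_nonneg (Finset.sum_nonneg fun j _ => by positivity) (abs_nonneg _))
    ((abs_nonneg _).trans (hw i))

/-- First-layer neurons `i` and `d + i` combine to `ramp (x i)`; second-layer neuron `k` is
`relu (∑ i, ramp (x i) - k)`. -/
def zigzagNet (a : ℝ) (d : ℕ) : ThreeLayerNet d where
  m1 := d + d
  m2 := d
  θ := Fin.append (fun i => EuclideanSpace.single i 1) (fun i => EuclideanSpace.single i 1)
  b := Fin.append (fun _ => -(3 / 8)) (fun _ => 3 / 8)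
  W _ := Fin.append (fun _ => 4 / 3) (fun _ => -(4 / 3))
  W0 k := -((k : ℕ) : ℝ)
  w k := zigzagCoeff a k
  w0 := a

lemma zigzagNet_eval (a : ℝ) (d : ℕ) (x : EuclideanSpace ℝ (Fin d)) :
    (zigzagNet a d).eval x = zigzag a d (∑ i, ramp (x i)) := by
  dsimp only [ThreeLayerNet.eval, zigzagNet]
  have hramp : ∀ t, 4 / 3 * relu (t + 3 / 8) + -(4 / 3) * relu (t - 3 / 8) = ramp t := fun t => by
    rw [ramp]
    ring
  simp only [Fin.sum_univ_add, Fin.append_left, Fin.append_right, EuclideanSpace.inner_single_left,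
    map_one, one_mul, sub_neg_eq_add, ← Finset.sum_add_distrib, hramp, ← sub_eq_add_neg]
  rw [zigzag, add_comm,
    Fin.sum_univ_eq_sum_range (fun k => zigzagCoeff a k * relu (∑ i, ramp (x i) - k)) d]

lemma zigzagNet_pnB_le {a : ℝ} (ha : 0 ≤ a) (d : ℕ) :
    (zigzagNet a d).pnB ≤ 16 * a * d ^ 2 + a := by
  have hw : ∀ k, |(zigzagNet a d).w k| ≤ 4 * a := fun k => by
    simp only [zigzagNet, zigzagCoeff]
    split_ifs
    · rw [abs_neg, abs_of_nonneg (by linarith)]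
      linarith
    · rw [abs_mul, abs_pow, abs_neg, abs_one, one_pow, one_mul, abs_of_nonneg (by linarith)]
  -- every first-layer neuron has `‖(θ j, b j)‖ = √(1 + (3 / 8) ^ 2) = √73 / 8`
  have hsqrt : √73 ≤ 9 := Real.sqrt_le_iff.2 ⟨by norm_num, by norm_num⟩
  have hW : ∀ k j, |(zigzagNet a d).W k j| *
      √(‖(zigzagNet a d).θ j‖ ^ 2 + (zigzagNet a d).b j ^ 2) ≤ 3 / 2 := fun k j => by
    refine Fin.addCases (fun i => ?_) (fun i => ?_) j <;>
    simp only [zigzagNet, Fin.append_left, Fin.append_right, PiLp.norm_single, norm_one] <;>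
    norm_num <;> linarith
  have hW0 : ∀ k, |(zigzagNet a d).W0 k| ≤ d := fun k => by
    simp only [zigzagNet, abs_neg, Nat.abs_cast]
    exact_mod_cast k.2.le
  calc (zigzagNet a d).pnB ≤ d * (4 * a * ((d + d : ℕ) * (3 / 2) + d)) + a :=
        (zigzagNet a d).pnB_le hw hW hW0 (abs_of_nonneg ha).le
    _ = 16 * a * d ^ 2 + a := by push_cast; ring

section Mixture

variable {d : ℕ} {σ a : ℝ}

lemma rhoMix_eq_sum_prod (d : ℕ) (σ : ℝ) (x : EuclideanSpace ℝ (Fin d)) :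
    rhoMix d σ x = 2 / (4 * √(2 * π * σ ^ 2)) ^ d * ∑ β ∈ Fintype.piFinset fun _ => Bset,
      (∏ i, Real.sign (β i)) * ∏ i, gaussBump σ (β i) (x i) := by
  simp only [rhoMix, gaussBump, ← Real.exp_sum, ← Finset.sum_div, Finset.sum_neg_distrib]

lemma prod_sign_mul_neg_one_pow_card {ι : Type*} [Fintype ι] {β : ι → ℝ} (hβ : ∀ i, β i ≠ 0) :
    (∏ i, Real.sign (β i)) * (-1) ^ #{i | 0 < β i} = (-1) ^ Fintype.card ι := by
  rw [← Finset.prod_const, Finset.prod_filter, ← Finset.prod_mul_distrib, ← Finset.card_univ,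
    ← Finset.prod_const]
  refine Finset.prod_congr rfl fun i _ => ?_
  rcases (hβ i).lt_or_gt with h | h
  · simp [Real.sign_of_neg h, h.not_gt]
  · simp [Real.sign_of_pos h, h]

def halfLine (b : ℝ) : Set ℝ := if 0 < b then Ici (3 / 8) else Iic (-(3 / 8))

lemma measurableSet_halfLine (b : ℝ) : MeasurableSet (halfLine b) := by
  unfold halfLine
  split_ifs
  exacts [measurableSet_Ici, measurableSet_Iic]

lemma ramp_of_mem_halfLine {b t : ℝ} (ht : t ∈ halfLine b) :
    ramp t = if 0 < b then 1 else 0 := by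
  unfold halfLine at ht
  split_ifs at ht ⊢
  exacts [ramp_of_ge ht, ramp_of_le ht]

lemma sub_le_setIntegral_halfLine_gaussBump (hσ : 0 < σ) {b ε : ℝ} (hb : 1 / 2 ≤ |b|)
    (htail : 8 * σ ^ 2 * exp (-(1 / 8) ^ 2 / (2 * σ ^ 2)) ≤ ε) :
    √(2 * π * σ ^ 2) - ε ≤ ∫ t in halfLine b, gaussBump σ b t := by
  have htail' : σ ^ 2 / (1 / 8) * exp (-(1 / 8) ^ 2 / (2 * σ ^ 2)) ≤ ε := by
    convert htail using 2
    ring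
  have hcompl : ∫ t in (halfLine b)ᶜ, gaussBump σ b t ≤ ε := by
    unfold halfLine
    split_ifs with hb0
    · rw [compl_Ici]
      rw [abs_of_pos hb0] at hb
      exact (setIntegral_Iio_gaussBump_le_of_le hσ (by norm_num) (by linarith)).trans htail'
    · rw [compl_Iic]
      rw [abs_of_nonpos (not_lt.1 hb0)] at hb
      exact (setIntegral_Ioi_gaussBump_le_of_le hσ (by norm_num) (by linarith)).trans htail'
  have hsplit := integral_add_compl (measurableSet_halfLine b) (integrable_gaussBump hσ b)
  rw [integral_gaussBump hσ] at hsplit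
  linarith

lemma integrable_zigzag_mul_prod_gaussBump (hσ : 0 < σ) (ha : 0 ≤ a) (β : Fin d → ℝ) :
    Integrable fun y : Fin d → ℝ => zigzag a d (∑ i, ramp (y i)) * ∏ i, gaussBump σ (β i) (y i) :=
  (Integrable.fintype_prod fun i => integrable_gaussBump hσ (β i)).bdd_mul
    continuous_zigzag_sum_ramp.aestronglyMeasurable
    (Eventually.of_forall fun y => (Real.norm_eq_abs _).trans_le (abs_zigzag_sum_ramp_le ha y))

lemma abs_integral_zigzag_mul_prod_gaussBump_sub_le (hσ : 0 < σ) (ha : 0 ≤ a)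
    (htail : 8 * σ ^ 2 * exp (-(1 / 8) ^ 2 / (2 * σ ^ 2)) ≤ √(2 * π * σ ^ 2) / (8 * d))
    {β : Fin d → ℝ} (hβ : ∀ i, 1 / 2 ≤ |β i|) :
    |(∫ y : Fin d → ℝ, zigzag a d (∑ i, ramp (y i)) * ∏ i, gaussBump σ (β i) (y i))
      - a * (-1) ^ #{i | 0 < β i} * √(2 * π * σ ^ 2) ^ d| ≤ a / 4 * √(2 * π * σ ^ 2) ^ d := by
  set Z := √(2 * π * σ ^ 2)
  have hvalue : ∀ y : Fin d → ℝ, (∀ i, y i ∈ halfLine (β i)) →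
      zigzag a d (∑ i, ramp (y i)) = a * (-1) ^ #{i | 0 < β i} := fun y hy => by
    simp only [ramp_of_mem_halfLine (hy _), Finset.sum_boole]
    exact zigzag_natCast (Finset.card_filter_le _ _ |>.trans (by simp))
  have hconc := abs_integral_mul_prod_sub_le (fun i => integrable_gaussBump hσ (β i))
    (fun i => gaussBump_nonneg σ (β i)) (fun i => measurableSet_halfLine (β i))
    continuous_zigzag_sum_ramp.aestronglyMeasurable
    (abs_zigzag_sum_ramp_le ha) (by simp [abs_of_nonneg ha]) hvalue
  have hδ : (d : ℝ) * (1 / (8 * d)) ≤ 1 / 8 := by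
    rcases Nat.eq_zero_or_pos d with rfl | hd
    · norm_num
    · exact le_of_eq (by field_simp)
  have hbox : Z ^ d - ∏ i, ∫ t in halfLine (β i), gaussBump σ (β i) t
      ≤ d * (1 / (8 * d)) * Z ^ d := by
    have hmass : ∀ i, (1 - 1 / (8 * d)) * Z ≤ ∫ t in halfLine (β i), gaussBump σ (β i) t :=
      fun i => by linarith [sub_le_setIntegral_halfLine_gaussBump hσ (hβ i) htail,
        show (1 - 1 / (8 * d)) * Z = Z - Z / (8 * d) by ring]
    have hδ1 : 1 / (8 * (d : ℝ)) ≤ 1 := by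
      rw [one_div]
      exact_mod_cast Nat.cast_inv_le_one (α := ℝ) (8 * d)
    simpa using pow_card_sub_prod_le (Real.sqrt_nonneg _) hδ1 hmass
  simp only [integral_gaussBump hσ, Finset.prod_const, Finset.card_univ, Fintype.card_fin] at hconc
  calc _ ≤ 2 * a * (Z ^ d - ∏ i, ∫ t in halfLine (β i), gaussBump σ (β i) t) := hconc
    _ ≤ 2 * a * (1 / 8 * Z ^ d) := by gcongr; exact hbox.trans (by gcongr)
    _ = a / 4 * Z ^ d := by ring

lemma half_le_abs_of_mem_Bset {b : ℝ} (hb : b ∈ Bset) : 1 / 2 ≤ |b| := by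
  simp only [Bset, Finset.mem_insert, Finset.mem_singleton] at hb
  rcases hb with rfl | rfl | rfl | rfl <;> norm_num [abs_of_pos, abs_of_neg]

lemma card_piFinset_Bset (d : ℕ) : #(Fintype.piFinset fun _ : Fin d => Bset) = 4 ^ d := by
  rw [Fintype.card_piFinset, Finset.prod_const, Finset.card_univ, Fintype.card_fin]
  congr
  simp only [Bset]
  norm_num

lemma le_abs_integral_zigzagNet_mul_rhoMix (hσ : 0 < σ) (ha : 0 ≤ a)
    (htail : 8 * σ ^ 2 * exp (-(1 / 8) ^ 2 / (2 * σ ^ 2)) ≤ √(2 * π * σ ^ 2) / (8 * d)) :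
    3 * a / 2 ≤ |∫ x, (zigzagNet a d).eval x * rhoMix d σ x| := by
  set Z := √(2 * π * σ ^ 2)
  set C := 2 / (4 * Z) ^ d
  set B := Fintype.piFinset fun _ : Fin d => Bset
  set J : (Fin d → ℝ) → ℝ := fun β =>
    ∫ y : Fin d → ℝ, zigzag a d (∑ i, ramp (y i)) * ∏ i, gaussBump σ (β i) (y i)
  have hZ : 0 < Z := Real.sqrt_pos.2 (by positivity)
  have hC : 0 < C := by positivity
  have hsum : ∫ x, (zigzagNet a d).eval x * rhoMix d σ x
      = ∑ β ∈ B, C * (∏ i, Real.sign (β i)) * J β := by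
    set G : (Fin d → ℝ) → ℝ := fun y => ∑ β ∈ B, C * (∏ i, Real.sign (β i)) *
      (zigzag a d (∑ i, ramp (y i)) * ∏ i, gaussBump σ (β i) (y i))
    have hpoint : ∀ x, (zigzagNet a d).eval x * rhoMix d σ x = G (WithLp.ofLp x) := fun x => by
      rw [zigzagNet_eval, rhoMix_eq_sum_prod, Finset.mul_sum, Finset.mul_sum]
      exact Finset.sum_congr rfl fun β _ => by ring
    simp_rw [hpoint]
    rw [show ∫ x : EuclideanSpace ℝ (Fin d), G x.ofLp = ∫ y, G y from
      (EuclideanSpace.volume_preserving_symm_measurableEquiv_toLp (Fin d)).integral_comp' G,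
      integral_finsetSum _ fun β _ => (integrable_zigzag_mul_prod_gaussBump hσ ha β).const_mul _]
    simp_rw [integral_const_mul]
    rfl
  have hterm : ∀ β ∈ B, |C * (∏ i, Real.sign (β i)) * J β - C * a * (-1) ^ d * Z ^ d|
      ≤ C * (a / 4 * Z ^ d) := fun β hβ => by
    have hβB : ∀ i, 1 / 2 ≤ |β i| := fun i => half_le_abs_of_mem_Bset (Fintype.mem_piFinset.1 hβ i)
    have hsign := prod_sign_mul_neg_one_pow_card fun i => abs_pos.1 (by linarith [hβB i])
    rw [Fintype.card_fin] at hsign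
    have hχ : |∏ i, Real.sign (β i)| = 1 := by simpa using congrArg abs hsign
    have hJ := abs_integral_zigzag_mul_prod_gaussBump_sub_le hσ ha htail hβB
    calc |C * (∏ i, Real.sign (β i)) * J β - C * a * (-1) ^ d * Z ^ d|
        = |C * (∏ i, Real.sign (β i)) * (J β - a * (-1) ^ #{i | 0 < β i} * Z ^ d)| := by
          rw [← hsign]
          ring_nf
      _ ≤ C * (a / 4 * Z ^ d) := by
          rw [abs_mul, abs_mul, hχ, mul_one, abs_of_pos hC]
          exact mul_le_mul_of_nonneg_left hJ hC.le
  have hCZ : 4 ^ d * C * Z ^ d = 2 := by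
    simp only [C, mul_pow]
    field_simp
  calc 3 * a / 2 = #B * (|C * a * (-1) ^ d * Z ^ d| - C * (a / 4 * Z ^ d)) := by
        simp only [B, card_piFinset_Bset, abs_mul, abs_pow, abs_neg, abs_one, one_pow, mul_one,
          abs_of_pos hC, abs_of_pos hZ, abs_of_nonneg ha]
        push_cast
        linear_combination (-(3 / 4) * a) * hCZ
    _ ≤ |∑ β ∈ B, C * (∏ i, Real.sign (β i)) * J β| := card_mul_sub_le_abs_sum hterm
    _ = |∫ x, (zigzagNet a d).eval x * rhoMix d σ x| := by rw [hsum]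

end Mixture

lemma eight_mul_sq_mul_exp_eq_of_log_eq {d : ℕ} (hd : 0 < d) {σ : ℝ} (hσ : 0 < σ)
    (h : (1 / 8 : ℝ) ^ 2 / (2 * σ ^ 2) = log (d * σ / (√(2 * π) * (1 / 8) * (1 / 8)))) :
    8 * σ ^ 2 * exp (-(1 / 8) ^ 2 / (2 * σ ^ 2)) = √(2 * π * σ ^ 2) / (8 * d) := by
  have hexp : exp ((1 / 8 : ℝ) ^ 2 / (2 * σ ^ 2)) = d * σ / (√(2 * π) * (1 / 8) * (1 / 8)) := by
    rw [h, exp_log (by positivity)]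
  rw [neg_div, exp_neg, hexp, show 2 * π * σ ^ 2 = σ ^ 2 * (2 * π) by ring,
    Real.sqrt_mul (sq_nonneg σ), Real.sqrt_sq hσ.le]
  field_simp

/-- With `ε = 1/8`, `x0 = 1/8` and `σ_d` the unique positive solution of
`x0²/(2σ²) = log(dσ/(√(2π)εx0))`, the three-layer IPM between `μ_d` and `ν_d`
is at least `1/(513d² + 512d + 1)`. -/
theorem d_F3L_final_bound (d : ℕ) (hd : 3 ≤ d) (σ : ℝ) (hσpos : 0 < σ)
    (hσ : (1/8 : ℝ) ^ 2 / (2 * σ ^ 2) =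
      Real.log ((d : ℝ) * σ / (Real.sqrt (2 * Real.pi) * (1/8) * (1/8)))) :
    ∃ N : ThreeLayerNet d, N.pnB ≤ 1 ∧
      1 / (513 * (d : ℝ) ^ 2 + 512 * d + 1) ≤
        |∫ x : EuclideanSpace ℝ (Fin d), N.eval x * rhoMix d σ x| := by
  set a := 1 / (513 * (d : ℝ) ^ 2 + 512 * d + 1)
  have ha : 0 < a := by positivity
  refine ⟨zigzagNet a d, ?_, ?_⟩
  · calc (zigzagNet a d).pnB ≤ 16 * a * d ^ 2 + a := zigzagNet_pnB_le ha.le d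
      _ = (16 * d ^ 2 + 1) / (513 * (d : ℝ) ^ 2 + 512 * d + 1) := by ring
      _ ≤ 1 := by rw [div_le_one (by positivity)]; nlinarith
  · have htail := eight_mul_sq_mul_exp_eq_of_log_eq (by omega) hσpos hσ
    linarith [le_abs_integral_zigzagNet_mul_rhoMix hσpos ha.le htail.le]


end
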